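/- arXiv:1504.05121 — 3 statements merged into one kernel-verified Lean document; each statement's English description precedes it below -/
import Mathlib

section
/- Let D ∈ ℕ. There exists a constant C = C(D) such that whenever M, M' ∈ M_D, j ∈ ℕ, d₀ ≥ -1, d₁, …, d_m ∈ ℕ satisfy M·J·A_j = A_{d₀}·J·A_{d₁}···J·A_{d_m}·M', one has m ≤ C. That is, the length m of the output string in the transition relation is uniformly bounded in terms of D alone. -/
/-- The set `M_D` of 2×2 integer matrices with determinant `±D` satisfying one of the
six type conditions (Types I–VI). Entries: α = M 0 0, β = M 0 1, γ = M 1 0, δ = M 1 1. -/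
def MD (D : ℕ) (M : Matrix (Fin 2) (Fin 2) ℤ) : Prop :=
  (M.det = (D : ℤ) ∨ M.det = -(D : ℤ)) ∧
  ((M 1 0 = 0 ∧ 0 ≤ M 0 1 ∧ 0 < M 0 0 ∧ 0 < M 1 1 ∧ M 0 1 < M 1 1) ∨
   (M 1 1 = 0 ∧ 0 ≤ M 0 0 ∧ 0 < M 0 1 ∧ 0 < M 1 0 ∧ M 0 0 < M 1 0) ∨
   (M 0 0 = 0 ∧ 0 ≤ M 1 1 ∧ 0 < M 0 1 ∧ 0 < M 1 0 ∧ M 1 1 < M 0 1) ∨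
   (M 0 1 = 0 ∧ 0 ≤ M 1 0 ∧ 0 < M 0 0 ∧ 0 < M 1 1 ∧ M 1 0 < M 0 0) ∨
   (M 0 0 < 0 ∧ 0 < M 0 1 ∧ 0 < M 1 0 ∧ 0 < M 1 1 ∧ |M 0 0| < M 1 0) ∨
   (M 0 1 < 0 ∧ 0 < M 0 0 ∧ 0 < M 1 0 ∧ 0 < M 1 1 ∧ |M 0 1| < M 1 1))

/-- The matrix `A_i = [[1,i],[0,1]]`. -/
def matA (i : ℤ) : Matrix (Fin 2) (Fin 2) ℤ := !![1, i; 0, 1]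

/-- The matrix `J = [[0,1],[1,0]]`. -/
def matJ : Matrix (Fin 2) (Fin 2) ℤ := !![0, 1; 1, 0]

/-!
Only the bottom-left entry of the transition relation matters. On the left it is `M 1 1 ≤ D`.
On the right `A_{d₀}` leaves the bottom row unchanged, and the bottom row `(x, y)` of
`J A_{d₁} ⋯ J A_{d_m}` is a pair of consecutive continuant denominators, so `0 ≤ x ≤ y` and
`x` grows at least linearly in `m`. Every first column `(a, b)` of a matrix in `M_D` has
`b ≥ 0` and `a + b ≥ 1`, hence the entry `x a + y b` is at least `x`.
-/

open Matrix

lemma MD.apply_one_one_le {D : ℕ} {M : Matrix (Fin 2) (Fin 2) ℤ} (hM : MD D M) :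
    M 1 1 ≤ D := by
  obtain ⟨hdet, htype⟩ := hM
  rw [det_fin_two] at hdet
  rcases htype with ⟨h₁, -, h₃, h₄, -⟩ | ⟨h₁, -⟩ | ⟨h₁, -, h₃, h₄, h₅⟩ | ⟨h₁, -, h₃, h₄, -⟩ |
    ⟨h₁, h₂, h₃, h₄, -⟩ | ⟨h₁, h₂, h₃, h₄, -⟩ <;>
  (try rw [h₁] at hdet) <;>
  rcases hdet with hdet | hdet <;> nlinarith [Int.natCast_nonneg D]

lemma MD.col_zero_bounds {D : ℕ} {M : Matrix (Fin 2) (Fin 2) ℤ} (hM : MD D M) :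
    0 ≤ M 1 0 ∧ 1 ≤ M 0 0 + M 1 0 := by
  rcases hM.2 with ⟨h₁, -, h₃, -⟩ | ⟨-, h₂, -, h₄, -⟩ | ⟨h₁, -, -, h₄, -⟩ | ⟨-, h₂, h₃, -⟩ |
    ⟨h₁, -, h₃, -, h₅⟩ | ⟨-, h₂, h₃, h₄, -⟩
  all_goals first
    | (rw [abs_of_neg h₁] at h₅; omega)
    | omega

lemma MD.apply_one_zero_le_mul {D : ℕ} {M N : Matrix (Fin 2) (Fin 2) ℤ} (hM : MD D M)
    (hx : 0 ≤ N 1 0) (hxy : N 1 0 ≤ N 1 1) : N 1 0 ≤ (N * M) 1 0 := by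
  obtain ⟨hb, hab⟩ := hM.col_zero_bounds
  rw [mul_apply, Fin.sum_univ_two]
  nlinarith [mul_nonneg hx (sub_nonneg.2 hab), mul_nonneg (sub_nonneg.2 hxy) hb]

lemma mul_matJ_mul_matA_apply_one_zero (M : Matrix (Fin 2) (Fin 2) ℤ) (j : ℤ) :
    (M * matJ * matA j) 1 0 = M 1 1 := by
  simp [matJ, matA, mul_apply, Fin.sum_univ_two]

lemma mul_matJ_mul_matA_apply_one_one (M : Matrix (Fin 2) (Fin 2) ℤ) (j : ℤ) :
    (M * matJ * matA j) 1 1 = M 1 0 + j * M 1 1 := by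
  simp [matJ, matA, mul_apply, Fin.sum_univ_two]
  ring

lemma matA_mul_apply_one (i : ℤ) (N : Matrix (Fin 2) (Fin 2) ℤ) (k : Fin 2) :
    (matA i * N) 1 k = N 1 k := by
  simp [matA, mul_apply, Fin.sum_univ_two]

/-- Appending `J A_k` maps the bottom row `(x, y)` to `(y, x + k y)`; the bound on `x + y`
keeps `y ≥ 1`, which makes the row grow. -/
lemma prod_matJ_mul_matA_row_one_bounds (ks : List ℤ) (hks : ∀ k ∈ ks, 0 < k) :
    let P := (ks.map fun k => matJ * matA k).prod
    0 ≤ P 1 0 ∧ P 1 0 ≤ P 1 1 ∧ (ks.length : ℤ) + 1 ≤ P 1 0 + P 1 1 ∧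
      (ks.length : ℤ) ≤ 2 * P 1 0 := by
  induction ks using List.reverseRecOn with
  | nil => simp
  | append_singleton ks k ih =>
    obtain ⟨hx, hxy, hsum, hlin⟩ := ih fun k' hk' => hks k' (List.mem_append_left _ hk')
    have hk : 0 < k := hks k (by simp)
    simp only [List.map_append, List.map_singleton, List.prod_append, List.prod_singleton,
      List.length_append, List.length_singleton, Nat.cast_add, Nat.cast_one]
    rw [← Matrix.mul_assoc, mul_matJ_mul_matA_apply_one_zero, mul_matJ_mul_matA_apply_one_one]
    refine ⟨?_, ?_, ?_, ?_⟩ <;> nlinarith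

theorem transition_length_bounded_general (D : ℕ) :
    ∃ C : ℕ, ∀ (M M' : Matrix (Fin 2) (Fin 2) ℤ), MD D M → MD D M' →
      ∀ (j : ℤ), 0 < j → ∀ (m : ℕ) (d : ℕ → ℤ),
        (-1 : ℤ) ≤ d 0 → (∀ i, 1 ≤ i → i ≤ m → 0 < d i) →
        M * matJ * matA j =
          matA (d 0) * ((List.range m).map (fun i => matJ * matA (d (i + 1)))).prod * M' →
        m ≤ C := by
  refine ⟨2 * D, fun M M' hM hM' j _ m d _ hd heq => ?_⟩
  set ks := (List.range m).map fun i => d (i + 1)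
  have hks : ∀ k ∈ ks, 0 < k := by
    simp only [ks, List.mem_map, List.mem_range]
    rintro _ ⟨i, hi, rfl⟩
    exact hd (i + 1) (by omega) (by omega)
  obtain ⟨hx, hxy, -, hlin⟩ := prod_matJ_mul_matA_row_one_bounds ks hks
  rw [List.length_map, List.length_range] at hlin
  have hprod : (List.range m).map (fun i => matJ * matA (d (i + 1))) =
      ks.map fun k => matJ * matA k := by
    simp only [ks, List.map_map]; rfl
  have hentry := congr_fun₂ heq 1 0
  rw [hprod, mul_matJ_mul_matA_apply_one_zero, Matrix.mul_assoc (matA _), matA_mul_apply_one]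
    at hentry
  have hlower := hM'.apply_one_zero_le_mul hx hxy
  have hupper := hM.apply_one_one_le
  omega

/-- Uniform bound on the length of the output string in the transition relation:
there is `C = C(D)` such that whenever `M, M' ∈ M_D`, `j ≥ 1`, `d₀ ≥ -1`,
`d₁,…,d_m ≥ 1` satisfy `M·J·A_j = A_{d₀}·J·A_{d₁}···J·A_{d_m}·M'`, one has `m ≤ C`. -/
theorem transition_length_bounded (D : ℕ) (hD : 0 < D) :
    ∃ C : ℕ, ∀ (M M' : Matrix (Fin 2) (Fin 2) ℤ), MD D M → MD D M' →
      ∀ (j : ℤ), 0 < j → ∀ (m : ℕ) (d : ℕ → ℤ),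
        (-1 : ℤ) ≤ d 0 → (∀ i, 1 ≤ i → i ≤ m → 0 < d i) →
        M * matJ * matA j =
          matA (d 0) * ((List.range m).map (fun i => matJ * matA (d (i + 1)))).prod * M' →
        m ≤ C :=
  transition_length_bounded_general D
end

section
/- Let D ∈ ℕ. There exists a constant K = K(D) such that: if c₁, …, c_k ∈ ℕ and M, M' ∈ M_D satisfy M·J·A_{c₁}·J·A_{c₂}···J·A_{c_k} = (A_{-1}·J·A_1)^k · M', then k ≤ K. (In particular, since (A_{-1}JA_1)² = I, if k is even then M·J·A_{c₁}···J·A_{c_k} = M', and the Fibonacci growth of the bottom row forces k to be bounded.) -/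
/-!
The bottom row `(x, y)` of `M ∈ M_D` is nonnegative and nonzero, and right multiplication by
`J·A_c` with `c ≥ 1` sends a row `(x, y)` to `(y, x + c·y)`; so the bottom row of
`M·J·A_{c₁}···J·A_{c_k}` dominates the Fibonacci pair `(F_k, F_{k+1})` and its entries sum to at
least `F_{k+1}`. On the other side `(A_{-1}·J·A_1)² = 1`, so the bottom row of
`(A_{-1}·J·A_1)^k·M'` is either that of `M'` or the sum of the two rows of `M'`; since the entries
of a matrix in `M_D` are bounded by `D`, its entries sum to at most `4D`. Hence
`k ≤ F_{k+1} ≤ 4D`.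
-/

open Matrix

theorem matJ_mul_matA (c : ℤ) : matJ * matA c = !![0, 1; 1, c] := by
  simp [matJ, matA]

theorem vecMul_matJ_mul_matA (v : Fin 2 → ℤ) (c : ℤ) :
    v ᵥ* (matJ * matA c) = ![v 1, v 0 + c * v 1] := by
  ext j
  fin_cases j <;> simp [matJ_mul_matA, vecMul, dotProduct, Fin.sum_univ_two, mul_comm]

theorem matA_neg_one_mul_matJ_mul_matA_one : matA (-1) * matJ * matA 1 = !![-1, 0; 1, 1] := by
  simp [matA, matJ]

theorem matA_neg_one_mul_matJ_mul_matA_one_sq : (matA (-1) * matJ * matA 1) ^ 2 = 1 := by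
  rw [matA_neg_one_mul_matJ_mul_matA_one, sq]
  simp [one_fin_two]

def FibDominates (m : ℕ) (v : Fin 2 → ℤ) : Prop :=
  0 ≤ v 0 ∧ (Nat.fib m : ℤ) ≤ v 1 ∧ (Nat.fib (m + 1) : ℤ) ≤ v 0 + v 1

namespace FibDominates

variable {m : ℕ} {v : Fin 2 → ℤ}

theorem vecMul_matJ_mul_matA (h : FibDominates m v) {c : ℤ} (hc : 0 < c) :
    FibDominates (m + 1) (v ᵥ* (matJ * matA c)) := by
  obtain ⟨h0, h1, h01⟩ := h
  have hfib : (Nat.fib (m + 2) : ℤ) = Nat.fib m + Nat.fib (m + 1) := by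
    rw [Nat.fib_add_two, Nat.cast_add]
  simp only [FibDominates, _root_.vecMul_matJ_mul_matA, cons_val_zero, cons_val_one,
    cons_val_fin_one]
  refine ⟨h1.trans' (Nat.cast_nonneg _), ?_, ?_⟩ <;> nlinarith

theorem vecMul_prod (h : FibDominates m v) {cs : List ℤ} (hcs : ∀ c ∈ cs, 0 < c) :
    FibDominates (m + cs.length) (v ᵥ* (cs.map fun c => matJ * matA c).prod) := by
  induction cs generalizing m v with
  | nil => simpa using h
  | cons c cs ih =>
    rw [List.map_cons, List.prod_cons, ← vecMul_vecMul, List.length_cons, ← add_assoc,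
      Nat.add_right_comm]
    exact ih (h.vecMul_matJ_mul_matA (hcs c List.mem_cons_self))
      fun x hx => hcs x (List.mem_cons_of_mem c hx)

end FibDominates

namespace MD

variable {D : ℕ} {M : Matrix (Fin 2) (Fin 2) ℤ}

theorem abs_apply_le (h : MD D M) (i j : Fin 2) : |M i j| ≤ D := by
  obtain ⟨hdet, htype⟩ := h
  rw [det_fin_two] at hdet
  have hentries : |M 0 0| ≤ D ∧ |M 0 1| ≤ D ∧ |M 1 0| ≤ D ∧ |M 1 1| ≤ D := by
    simp only [abs_le]
    rcases hdet with hdet | hdet <;> rcases htype with h | h | h | h | h | h <;>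
      (try simp only [abs_lt] at h) <;> refine ⟨⟨?_, ?_⟩, ⟨?_, ?_⟩, ⟨?_, ?_⟩, ⟨?_, ?_⟩⟩ <;> nlinarith
  fin_cases i <;> fin_cases j <;> simp [hentries]

theorem fibDominates_bottom_row (h : MD D M) : FibDominates 0 (M 1) := by
  simp only [FibDominates, zero_add, Nat.fib_zero, Nat.fib_one, Nat.cast_zero, Nat.cast_one]
  rcases h.2 with h | h | h | h | h | h <;> omega

theorem bottom_row_sum_pow_mul_le (h : MD D M) (k : ℕ) :
    ((matA (-1) * matJ * matA 1) ^ k * M) 1 0 + ((matA (-1) * matJ * matA 1) ^ k * M) 1 1 ≤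
      4 * D := by
  have hle (i j : Fin 2) : M i j ≤ D := (le_abs_self _).trans (h.abs_apply_le i j)
  rw [pow_eq_pow_mod k matA_neg_one_mul_matJ_mul_matA_one_sq]
  rcases Nat.mod_two_eq_zero_or_one k with hk | hk
  · rw [hk, pow_zero, one_mul]
    linarith [hle 1 0, hle 1 1]
  · rw [hk, pow_one, matA_neg_one_mul_matJ_mul_matA_one]
    simp only [mul_apply, Fin.sum_univ_two, of_apply, cons_val', cons_val_zero, cons_val_one,
      cons_val_fin_one, one_mul]
    linarith [hle 0 0, hle 0 1, hle 1 0, hle 1 1]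

end MD

theorem contracting_strings_bounded_general (D : ℕ) :
    ∃ K : ℕ, ∀ (k : ℕ) (cs : List ℤ), cs.length = k → (∀ x ∈ cs, 0 < x) →
      ∀ (M M' : Matrix (Fin 2) (Fin 2) ℤ), MD D M → MD D M' →
        M * (cs.map (fun d => matJ * matA d)).prod =
          (matA (-1) * matJ * matA 1) ^ k * M' → k ≤ K := by
  refine ⟨4 * D, fun k cs hlen hcs M M' hM hM' heq => ?_⟩
  have hgrowth := hM.fibDominates_bottom_row.vecMul_prod hcs
  rw [zero_add, hlen, ← mul_apply_eq_vecMul, heq] at hgrowth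
  have hfib : (Nat.fib (k + 1) : ℤ) ≤ 4 * D :=
    hgrowth.2.2.trans (hM'.bottom_row_sum_pow_mul_le k)
  have := Nat.le_fib_add_one (k + 1)
  omega

/-- Uniform bound `K = K(D)`: if `c₁,…,c_k ≥ 1` and `M, M' ∈ M_D` satisfy
`M·J·A_{c₁}···J·A_{c_k} = (A_{-1}·J·A_1)^k · M'`, then `k ≤ K`. -/
theorem contracting_strings_bounded (D : ℕ) (hD : 0 < D) :
    ∃ K : ℕ, ∀ (k : ℕ) (cs : List ℤ), cs.length = k → (∀ x ∈ cs, 0 < x) →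
      ∀ (M M' : Matrix (Fin 2) (Fin 2) ℤ), MD D M → MD D M' →
        M * (cs.map (fun d => matJ * matA d)).prod =
          (matA (-1) * matJ * matA 1) ^ k * M' → k ≤ K :=
  contracting_strings_bounded_general D
end

section
/- Let T be the Gauss map on [0,1) and μ the Gauss measure dμ = dx/((log 2)(1+x)). There is an absolute constant C > 0 such that for every measurable set E ⊆ [0,1), every n ∈ ℕ, and every rank-n continued-fraction cylinder set C_s: (1/C)·μ(E)·μ(C_s) ≤ μ(T^{-n}E ∩ C_s) ≤ C·μ(E)·μ(C_s). -/
open MeasureTheory Filter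

/-- The Gauss map `T(x) = 1/x - ⌊1/x⌋` (with `T 0 = 0`). -/
noncomputable def gauss (x : ℝ) : ℝ := if x = 0 then 0 else x⁻¹ - ⌊x⁻¹⌋

/-- `cfDigit x i` is the continued fraction partial quotient `a_{i+1}(x)`
of `x ∈ [0,1)`, namely `⌊1 / T^i x⌋`. -/
noncomputable def cfDigit (x : ℝ) (i : ℕ) : ℤ := ⌊(gauss^[i] x)⁻¹⌋

/-- The continued fraction cylinder set of the string `s = [c₁,…,c_n]`. -/
def cyl (s : List ℤ) : Set ℝ :=
  {x | x ∈ Set.Ico (0 : ℝ) 1 ∧ ∀ i < s.length, cfDigit x i = s.getD i 0}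

/-- The Gauss measure `μ(A) = ∫_A dx / ((log 2)(1+x))` on `[0,1)`. -/
noncomputable def gaussMeasure : Measure ℝ :=
  (volume.restrict (Set.Ico (0 : ℝ) 1)).withDensity
    (fun x => ENNReal.ofReal (1 / (Real.log 2 * (1 + x))))

open scoped Classical in
/-- The number of `i < n` with `T^i x` in the cylinder of `s`. -/
noncomputable def cfCount (x : ℝ) (s : List ℤ) (n : ℕ) : ℕ :=
  ((Finset.range n).filter (fun i => gauss^[i] x ∈ cyl s)).card

/-- `x ∈ [0,1)` is CF-normal: every finite string of positive integers occurs in the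
continued fraction expansion of `x` with limiting frequency equal to the Gauss
measure of its cylinder set. -/
noncomputable def cfNormal (x : ℝ) : Prop :=
  x ∈ Set.Ico (0 : ℝ) 1 ∧
  ∀ s : List ℤ, s ≠ [] → (∀ c ∈ s, 0 < c) →
    Tendsto (fun n : ℕ => (cfCount x s n : ℝ) / n) atTop
      (nhds (gaussMeasure (cyl s)).toReal)

/-- A real number `y` is CF-normal if its fractional part is CF-normal. -/
noncomputable def cfNormalReal (y : ℝ) : Prop := cfNormal (Int.fract y)

/-- The action of an integer matrix on a real number by a linear fractional
transformation. -/
noncomputable def mobius (M : Matrix (Fin 2) (Fin 2) ℤ) (x : ℝ) : ℝ :=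
  ((M 0 0 : ℝ) * x + (M 0 1 : ℝ)) / ((M 1 0 : ℝ) * x + (M 1 1 : ℝ))

/-! On the cylinder of `s = [c₁, …, c_n]`, `T^n` is inverted by the Möbius map `ψ_s` of the
matrix `!![0, 1; 1, c₁] ⋯ !![0, 1; 1, c_n]`, whose bottom row `(q', q)` satisfies `0 ≤ q' ≤ q`.
Hence `|ψ_s'(t)| = (q' t + q)⁻²` varies by at most a factor `4` on `[0, 1)`, so `ψ_s` scales the
Lebesgue measure of every subset of `[0, 1)` by `q⁻²` up to a factor `4`. Applied to `E` and to
`[0, 1)` this gives `λ(T⁻ⁿE ∩ C_s) ≍ λ(E) λ(C_s)`, and the Gauss density lies between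
`1 / (2 log 2)` and `1 / log 2`, within a factor `2` of `1`. -/

open Set

open scoped ENNReal

namespace MeasureTheory

theorem ofReal_mul_volume_le_volume_image {f f' : ℝ → ℝ} {s : Set ℝ} (hs : MeasurableSet s)
    (hf' : ∀ x ∈ s, HasDerivWithinAt f (f' x) s x) (hf : InjOn f s) {a : ℝ}
    (ha : ∀ x ∈ s, a ≤ |f' x|) :
    ENNReal.ofReal a * volume s ≤ volume (f '' s) := by
  rw [← setLIntegral_one (f '' s), lintegral_image_eq_lintegral_abs_deriv_mul hs hf' hf,
    ← setLIntegral_const]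
  exact lintegral_mono_ae <| (ae_restrict_iff' hs).2 <| .of_forall fun x hx => by
    simpa using ENNReal.ofReal_le_ofReal (ha x hx)

theorem volume_image_le_ofReal_mul_volume {f f' : ℝ → ℝ} {s : Set ℝ} (hs : MeasurableSet s)
    (hf' : ∀ x ∈ s, HasDerivWithinAt f (f' x) s x) (hf : InjOn f s) {b : ℝ}
    (hb : ∀ x ∈ s, |f' x| ≤ b) :
    volume (f '' s) ≤ ENNReal.ofReal b * volume s := by
  rw [← setLIntegral_one (f '' s), lintegral_image_eq_lintegral_abs_deriv_mul hs hf' hf,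
    ← setLIntegral_const]
  exact lintegral_mono_ae <| (ae_restrict_iff' hs).2 <| .of_forall fun x hx => by
    simpa using ENNReal.ofReal_le_ofReal (hb x hx)

end MeasureTheory

section Mobius

theorem mobius_one (x : ℝ) : mobius 1 x = x := by
  simp [mobius]

variable (M : Matrix (Fin 2) (Fin 2) ℤ)

theorem mobius_mul (N : Matrix (Fin 2) (Fin 2) ℤ) {x : ℝ} (hx : (N 1 0 : ℝ) * x + N 1 1 ≠ 0) :
    mobius (M * N) x = mobius M (mobius N x) := by
  simp only [mobius, Matrix.mul_apply, Fin.sum_univ_two, Int.cast_add, Int.cast_mul]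
  rw [mul_div_assoc', mul_div_assoc', div_add' _ _ _ hx, div_add' _ _ _ hx,
    div_div_div_cancel_right₀ hx]
  congr 1 <;> ring

theorem hasDerivAt_mobius {x : ℝ} (hx : (M 1 0 : ℝ) * x + M 1 1 ≠ 0) :
    HasDerivAt (mobius M) ((M.det : ℝ) / ((M 1 0 : ℝ) * x + M 1 1) ^ 2) x := by
  have hnum := ((hasDerivAt_id' x).const_mul (M 0 0 : ℝ)).add_const (M 0 1 : ℝ)
  have hden := ((hasDerivAt_id' x).const_mul (M 1 0 : ℝ)).add_const (M 1 1 : ℝ)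
  refine (hnum.div hden hx).congr_deriv ?_
  rw [Matrix.det_fin_two]
  push_cast
  ring

theorem mobius_injOn (hM : M.det ≠ 0) :
    InjOn (mobius M) {x | (M 1 0 : ℝ) * x + M 1 1 ≠ 0} := by
  intro x hx y hy hxy
  rw [mobius, mobius, div_eq_div_iff hx hy] at hxy
  have hdet : (M.det : ℝ) ≠ 0 := by exact_mod_cast hM
  rw [Matrix.det_fin_two] at hdet
  push_cast at hdet
  apply mul_left_cancel₀ hdet
  linear_combination hxy

end Mobius

section MobiusBounds

variable {M : Matrix (Fin 2) (Fin 2) ℤ}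

theorem mobius_denom_pos (h0 : 0 ≤ M 1 0) (h2 : 0 < M 1 1) {t : ℝ} (ht : 0 ≤ t) :
    0 < (M 1 0 : ℝ) * t + M 1 1 := by
  have : (0 : ℝ) ≤ M 1 0 := by exact_mod_cast h0
  have : (0 : ℝ) < M 1 1 := by exact_mod_cast h2
  positivity

theorem abs_deriv_mobius (hdet : |M.det| = 1) (t : ℝ) :
    |(M.det : ℝ) / ((M 1 0 : ℝ) * t + M 1 1) ^ 2| = (((M 1 0 : ℝ) * t + M 1 1) ^ 2)⁻¹ := by
  rw [abs_div, abs_sq, ← Int.cast_abs, hdet, Int.cast_one, one_div]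

variable {E : Set ℝ} (hdet : |M.det| = 1) (h0 : 0 ≤ M 1 0) (h2 : 0 < M 1 1)
  (hE : MeasurableSet E) (hE1 : E ⊆ Ico 0 1)
include hdet h0 h2 hE hE1

theorem ofReal_mul_volume_le_volume_image_mobius (h1 : M 1 0 ≤ M 1 1) :
    ENNReal.ofReal ((4 * (M 1 1 : ℝ) ^ 2)⁻¹) * volume E ≤ volume (mobius M '' E) := by
  have hM : M.det ≠ 0 := fun h => by simp [h] at hdet
  refine ofReal_mul_volume_le_volume_image hE
    (fun t ht => (hasDerivAt_mobius M (mobius_denom_pos h0 h2 (hE1 ht).1).ne').hasDerivWithinAt)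
    ((mobius_injOn M hM).mono fun t ht => (mobius_denom_pos h0 h2 (hE1 ht).1).ne')
    fun t ht => ?_
  obtain ⟨ht0, ht1⟩ := hE1 ht
  have hc0 : (0 : ℝ) ≤ M 1 0 := by exact_mod_cast h0
  have hc1 : (M 1 0 : ℝ) ≤ M 1 1 := by exact_mod_cast h1
  have hden : (M 1 0 : ℝ) * t + M 1 1 ≤ 2 * M 1 1 := by nlinarith
  rw [abs_deriv_mobius hdet]
  gcongr
  nlinarith [mobius_denom_pos h0 h2 ht0]

theorem volume_image_mobius_le_ofReal_mul_volume :
    volume (mobius M '' E) ≤ ENNReal.ofReal (((M 1 1 : ℝ) ^ 2)⁻¹) * volume E := by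
  have hM : M.det ≠ 0 := fun h => by simp [h] at hdet
  refine volume_image_le_ofReal_mul_volume hE
    (fun t ht => (hasDerivAt_mobius M (mobius_denom_pos h0 h2 (hE1 ht).1).ne').hasDerivWithinAt)
    ((mobius_injOn M hM).mono fun t ht => (mobius_denom_pos h0 h2 (hE1 ht).1).ne')
    fun t ht => ?_
  have hc : (0 : ℝ) ≤ M 1 0 := by exact_mod_cast h0
  have hq : (0 : ℝ) < M 1 1 := by exact_mod_cast h2
  rw [abs_deriv_mobius hdet]
  gcongr
  nlinarith [(hE1 ht).1]

end MobiusBounds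

theorem gauss_eq_fract_inv (x : ℝ) : gauss x = Int.fract x⁻¹ := by
  rcases eq_or_ne x 0 with rfl | hx
  · simp [gauss]
  · rw [gauss, if_neg hx, Int.self_sub_floor]

theorem gauss_mem_Ico (x : ℝ) : gauss x ∈ Ico 0 1 := by
  rw [gauss_eq_fract_inv]
  exact ⟨Int.fract_nonneg _, Int.fract_lt_one _⟩

theorem mapsTo_gauss : MapsTo gauss (Ico 0 1) (Ico 0 1) := fun x _ => gauss_mem_Ico x

theorem inv_floor_inv_add_gauss (x : ℝ) : ((⌊x⁻¹⌋ : ℝ) + gauss x)⁻¹ = x := by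
  rw [gauss_eq_fract_inv, Int.floor_add_fract, inv_inv]

theorem gauss_inv_intCast_add (k : ℤ) {u : ℝ} (hu : u ∈ Ico 0 1) : gauss ((k : ℝ) + u)⁻¹ = u := by
  rw [gauss_eq_fract_inv, inv_inv, Int.fract_intCast_add, Int.fract_eq_self.2 hu]

theorem cfDigit_zero (x : ℝ) : cfDigit x 0 = ⌊x⁻¹⌋ := rfl

theorem cfDigit_succ (x : ℝ) (i : ℕ) : cfDigit x (i + 1) = cfDigit (gauss x) i := rfl

theorem mem_cyl_cons {x : ℝ} {k : ℤ} {s : List ℤ} :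
    x ∈ cyl (k :: s) ↔ x ∈ Ico 0 1 ∧ ⌊x⁻¹⌋ = k ∧ gauss x ∈ cyl s := by
  simp only [cyl, mem_ofPred_eq, List.length_cons, Nat.forall_lt_succ_left, cfDigit_zero,
    cfDigit_succ, List.getD_cons_zero, List.getD_cons_succ, gauss_mem_Ico, true_and]

/-- `mobius (cfMatrix s)` is the inverse branch of `gauss^[s.length]` onto the cylinder of `s`. -/
def cfMatrix : List ℤ → Matrix (Fin 2) (Fin 2) ℤ
  | [] => 1
  | k :: s => !![0, 1; 1, k] * cfMatrix s

theorem cfMatrix_append (s t : List ℤ) : cfMatrix (s ++ t) = cfMatrix s * cfMatrix t := by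
  induction s with
  | nil => simp [cfMatrix]
  | cons k s ih => simp [cfMatrix, ih]

theorem det_cfMatrix (s : List ℤ) : (cfMatrix s).det = (-1) ^ s.length := by
  induction s with
  | nil => simp [cfMatrix]
  | cons k s ih =>
    rw [cfMatrix, Matrix.det_mul, Matrix.det_fin_two_of, ih, List.length_cons, pow_succ]
    ring

theorem cfMatrix_bottom_row_bounds {s : List ℤ} (hs : ∀ k ∈ s, 0 < k) :
    0 ≤ cfMatrix s 1 0 ∧ cfMatrix s 1 0 ≤ cfMatrix s 1 1 ∧ 0 < cfMatrix s 1 1 := by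
  induction s using List.reverseRecOn with
  | nil => simp [cfMatrix]
  | append_singleton s k ih =>
    obtain ⟨h0, -, h2⟩ := ih fun c hc => hs c (List.mem_append_left _ hc)
    have hk : 0 < k := hs k (by simp)
    simp only [cfMatrix_append, cfMatrix, mul_one, Matrix.mul_apply, Matrix.of_apply,
      Matrix.cons_val', Matrix.cons_val_zero, Matrix.cons_val_one, Matrix.cons_val_fin_one,
      Fin.sum_univ_two, mul_zero, zero_add]
    refine ⟨h2.le, ?_, ?_⟩ <;> nlinarith

section Cylinder

variable {s : List ℤ} (hs : ∀ k ∈ s, 0 < k)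
include hs

theorem cfMatrix_denom_pos {t : ℝ} (ht : 0 ≤ t) :
    0 < (cfMatrix s 1 0 : ℝ) * t + cfMatrix s 1 1 :=
  mobius_denom_pos (cfMatrix_bottom_row_bounds hs).1 (cfMatrix_bottom_row_bounds hs).2.2 ht

theorem mobius_cfMatrix_cons (k : ℤ) {t : ℝ} (ht : 0 ≤ t) :
    mobius (cfMatrix (k :: s)) t = (k + mobius (cfMatrix s) t)⁻¹ := by
  rw [cfMatrix, mobius_mul _ _ (cfMatrix_denom_pos hs ht).ne']
  simp [mobius, add_comm]

theorem mobius_cfMatrix_gauss_iterate {x : ℝ} (hx : x ∈ cyl s) :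
    mobius (cfMatrix s) (gauss^[s.length] x) = x := by
  induction s generalizing x with
  | nil => exact mobius_one x
  | cons k s ih =>
    have hs' : ∀ c ∈ s, 0 < c := fun c hc => hs c (List.mem_cons_of_mem _ hc)
    obtain ⟨-, hk, hgx⟩ := mem_cyl_cons.1 hx
    have ht : 0 ≤ gauss^[s.length] (gauss x) := (mapsTo_gauss.iterate _ (gauss_mem_Ico x)).1
    rw [List.length_cons, Function.iterate_succ_apply, mobius_cfMatrix_cons hs' k ht,
      ih hs' hgx, ← hk, inv_floor_inv_add_gauss]

-- `t = 0` is excluded: `mobius (cfMatrix [1]) 0 = 1 ∉ cyl [1]`.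
theorem mobius_cfMatrix_mem_cyl {t : ℝ} (ht : t ∈ Ioo 0 1) :
    0 < mobius (cfMatrix s) t ∧ mobius (cfMatrix s) t ∈ cyl s ∧
      gauss^[s.length] (mobius (cfMatrix s) t) = t := by
  induction s with
  | nil => simp [cfMatrix, mobius_one, cyl, ht.1, ht.1.le, ht.2]
  | cons k s ih =>
    have hs' : ∀ c ∈ s, 0 < c := fun c hc => hs c (List.mem_cons_of_mem _ hc)
    have hk : (1 : ℝ) ≤ k := by exact_mod_cast hs k List.mem_cons_self
    obtain ⟨hu0, hu, hut⟩ := ih hs'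
    set u := mobius (cfMatrix s) t
    have huIco : u ∈ Ico 0 1 := hu.1
    rw [mobius_cfMatrix_cons hs' k ht.1.le, List.length_cons, Function.iterate_succ_apply,
      gauss_inv_intCast_add k huIco, mem_cyl_cons, gauss_inv_intCast_add k huIco, inv_inv,
      Int.floor_intCast_add, Int.floor_eq_zero_iff.2 huIco, add_zero]
    have hpos : 0 < (k : ℝ) + u := by linarith
    exact ⟨inv_pos.2 hpos,
      ⟨⟨(inv_pos.2 hpos).le, inv_lt_one_of_one_lt₀ (by linarith)⟩, rfl, hu⟩, hut⟩

theorem preimage_inter_cyl_subset_image (E : Set ℝ) :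
    gauss^[s.length] ⁻¹' E ∩ cyl s ⊆ mobius (cfMatrix s) '' E :=
  fun _ ⟨hxE, hx⟩ => ⟨_, hxE, mobius_cfMatrix_gauss_iterate hs hx⟩

theorem image_inter_Ioo_subset_preimage_inter_cyl (E : Set ℝ) :
    mobius (cfMatrix s) '' (E ∩ Ioo 0 1) ⊆ gauss^[s.length] ⁻¹' E ∩ cyl s := by
  rintro _ ⟨t, ⟨htE, ht⟩, rfl⟩
  obtain ⟨-, hcyl, hgt⟩ := mobius_cfMatrix_mem_cyl hs ht
  exact ⟨by rwa [mem_preimage, hgt], hcyl⟩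

theorem volume_preimage_inter_cyl {E : Set ℝ} (hE : E ⊆ Ico 0 1) :
    volume (gauss^[s.length] ⁻¹' E ∩ cyl s) = volume (mobius (cfMatrix s) '' E) := by
  refine le_antisymm (measure_mono (preimage_inter_cyl_subset_image hs E)) ?_
  have hsplit : mobius (cfMatrix s) '' E ⊆
      mobius (cfMatrix s) '' (E ∩ Ioo 0 1) ∪ {mobius (cfMatrix s) 0} := by
    rintro _ ⟨t, htE, rfl⟩
    rcases (hE htE).1.eq_or_lt with rfl | ht0
    · exact Or.inr rfl
    · exact Or.inl ⟨t, ⟨htE, ht0, (hE htE).2⟩, rfl⟩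
  calc volume (mobius (cfMatrix s) '' E)
      ≤ volume (mobius (cfMatrix s) '' (E ∩ Ioo 0 1)) + volume {mobius (cfMatrix s) 0} :=
        (measure_mono hsplit).trans (measure_union_le _ _)
    _ ≤ volume (gauss^[s.length] ⁻¹' E ∩ cyl s) := by
        rw [measure_singleton, add_zero]
        exact measure_mono (image_inter_Ioo_subset_preimage_inter_cyl hs E)

end Cylinder

theorem ofReal_inv_sq_eq_four_mul (q : ℝ) :
    ENNReal.ofReal ((q ^ 2)⁻¹) = 4 * ENNReal.ofReal ((4 * q ^ 2)⁻¹) := by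
  rw [← ENNReal.ofReal_ofNat 4, ← ENNReal.ofReal_mul (by norm_num), mul_inv, ← mul_assoc]
  norm_num

theorem preimage_Ico_inter_cyl (s : List ℤ) : gauss^[s.length] ⁻¹' Ico 0 1 ∩ cyl s = cyl s :=
  inter_eq_self_of_subset_right fun _ hx => mapsTo_gauss.iterate _ hx.1

section CylinderVolume

variable {s : List ℤ} (hs : ∀ k ∈ s, 0 < k) {E : Set ℝ} (hE : MeasurableSet E)
  (hE1 : E ⊆ Ico 0 1)
include hs hE hE1

theorem ofReal_mul_volume_le_volume_preimage_inter_cyl :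
    ENNReal.ofReal ((4 * (cfMatrix s 1 1 : ℝ) ^ 2)⁻¹) * volume E ≤
      volume (gauss^[s.length] ⁻¹' E ∩ cyl s) := by
  obtain ⟨h0, h1, h2⟩ := cfMatrix_bottom_row_bounds hs
  rw [volume_preimage_inter_cyl hs hE1]
  exact ofReal_mul_volume_le_volume_image_mobius (by rw [det_cfMatrix, abs_neg_one_pow]) h0 h2
    hE hE1 h1

theorem volume_preimage_inter_cyl_le_ofReal_mul :
    volume (gauss^[s.length] ⁻¹' E ∩ cyl s) ≤
      ENNReal.ofReal (((cfMatrix s 1 1 : ℝ) ^ 2)⁻¹) * volume E := by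
  obtain ⟨h0, -, h2⟩ := cfMatrix_bottom_row_bounds hs
  rw [volume_preimage_inter_cyl hs hE1]
  exact volume_image_mobius_le_ofReal_mul_volume (by rw [det_cfMatrix, abs_neg_one_pow]) h0 h2
    hE hE1

theorem volume_preimage_inter_cyl_le :
    volume (gauss^[s.length] ⁻¹' E ∩ cyl s) ≤ 4 * (volume E * volume (cyl s)) := by
  have hC := ofReal_mul_volume_le_volume_preimage_inter_cyl hs measurableSet_Ico subset_rfl
  rw [preimage_Ico_inter_cyl, Real.volume_Ico, sub_zero, ENNReal.ofReal_one, mul_one] at hC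
  calc volume (gauss^[s.length] ⁻¹' E ∩ cyl s)
      ≤ ENNReal.ofReal (((cfMatrix s 1 1 : ℝ) ^ 2)⁻¹) * volume E :=
        volume_preimage_inter_cyl_le_ofReal_mul hs hE hE1
    _ = 4 * (volume E * ENNReal.ofReal ((4 * (cfMatrix s 1 1 : ℝ) ^ 2)⁻¹)) := by
        rw [ofReal_inv_sq_eq_four_mul]; ring
    _ ≤ 4 * (volume E * volume (cyl s)) := by gcongr

theorem volume_mul_volume_cyl_le :
    volume E * volume (cyl s) ≤ 4 * volume (gauss^[s.length] ⁻¹' E ∩ cyl s) := by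
  have hC := volume_preimage_inter_cyl_le_ofReal_mul hs measurableSet_Ico subset_rfl
  rw [preimage_Ico_inter_cyl, Real.volume_Ico, sub_zero, ENNReal.ofReal_one, mul_one] at hC
  calc volume E * volume (cyl s)
      ≤ volume E * ENNReal.ofReal (((cfMatrix s 1 1 : ℝ) ^ 2)⁻¹) := by gcongr
    _ = 4 * (ENNReal.ofReal ((4 * (cfMatrix s 1 1 : ℝ) ^ 2)⁻¹) * volume E) := by
        rw [ofReal_inv_sq_eq_four_mul]; ring
    _ ≤ 4 * volume (gauss^[s.length] ⁻¹' E ∩ cyl s) := by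
        gcongr
        exact ofReal_mul_volume_le_volume_preimage_inter_cyl hs hE hE1

end CylinderVolume

theorem gaussMeasure_le_two_mul_volume {X : Set ℝ} (hX : X ⊆ Ico 0 1) :
    gaussMeasure X ≤ 2 * volume X := by
  have hle : gaussMeasure ≤ (2 : ℝ≥0∞) • volume.restrict (Ico 0 1) := by
    rw [gaussMeasure, ← withDensity_const]
    refine withDensity_mono <| (ae_restrict_iff' measurableSet_Ico).2 <| .of_forall fun x hx => ?_
    rw [← ENNReal.ofReal_ofNat]
    refine ENNReal.ofReal_le_ofReal ?_
    have hlog : 1 / 2 < Real.log 2 := by linarith [Real.log_two_gt_d9]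
    rw [div_le_iff₀ (by nlinarith [hx.1])]
    nlinarith [hx.1]
  simpa [Measure.restrict_eq_self _ hX] using hle X

theorem volume_le_two_mul_gaussMeasure {X : Set ℝ} (hX : X ⊆ Ico 0 1) :
    volume X ≤ 2 * gaussMeasure X := by
  have hle : volume.restrict (Ico 0 1) ≤ (2 : ℝ≥0∞) • gaussMeasure := by
    rw [gaussMeasure, ← withDensity_smul' _ _ ENNReal.ofNat_ne_top]
    conv_lhs => rw [← withDensity_one (μ := volume.restrict (Ico 0 1))]
    refine withDensity_mono <| (ae_restrict_iff' measurableSet_Ico).2 <| .of_forall fun x hx => ?_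
    simp only [Pi.one_apply, Pi.smul_apply, smul_eq_mul]
    rw [← ENNReal.ofReal_ofNat, ← ENNReal.ofReal_mul (by norm_num), ← ENNReal.ofReal_one]
    refine ENNReal.ofReal_le_ofReal ?_
    have hlog : Real.log 2 < 1 := by linarith [Real.log_two_lt_d9]
    have hpos : 0 < Real.log 2 * (1 + x) := by nlinarith [hx.1, Real.log_pos one_lt_two]
    rw [mul_one_div, le_div_iff₀ hpos, one_mul]
    nlinarith [mul_le_mul hlog.le (by linarith [hx.2] : 1 + x ≤ 2) (by linarith [hx.1]) zero_le_one]
  simpa [Measure.restrict_eq_self _ hX] using hle X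

/-- Rényi's condition for the Gauss map: there is an absolute constant `C > 0` such
that for every measurable `E ⊆ [0,1)`, every `n`, and every rank-`n` cylinder `C_s`,
`(1/C)·μ(E)·μ(C_s) ≤ μ(T^{-n}E ∩ C_s) ≤ C·μ(E)·μ(C_s)`. -/
theorem gauss_renyi_condition :
    ∃ C : ℝ, 0 < C ∧ ∀ (E : Set ℝ), MeasurableSet E → E ⊆ Set.Ico (0 : ℝ) 1 →
      ∀ (n : ℕ) (s : List ℤ), s.length = n → (∀ c ∈ s, 0 < c) →
        ENNReal.ofReal (1 / C) * (gaussMeasure E * gaussMeasure (cyl s)) ≤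
            gaussMeasure ((gauss^[n]) ⁻¹' E ∩ cyl s) ∧
        gaussMeasure ((gauss^[n]) ⁻¹' E ∩ cyl s) ≤
            ENNReal.ofReal C * (gaussMeasure E * gaussMeasure (cyl s)) := by
  refine ⟨32, by norm_num, fun E hE hE1 n s hn hs => ?_⟩
  subst hn
  set A := gauss^[s.length] ⁻¹' E ∩ cyl s
  have hA : A ⊆ Ico 0 1 := fun _ hx => hx.2.1
  have hC : cyl s ⊆ Ico 0 1 := fun _ hx => hx.1
  rw [one_div, ENNReal.ofReal_inv_of_pos (by norm_num), ENNReal.ofReal_ofNat,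
    ENNReal.inv_mul_le_iff (by norm_num) (by norm_num)]
  constructor
  · calc gaussMeasure E * gaussMeasure (cyl s)
        ≤ 2 * volume E * (2 * volume (cyl s)) :=
          mul_le_mul' (gaussMeasure_le_two_mul_volume hE1) (gaussMeasure_le_two_mul_volume hC)
      _ = 4 * (volume E * volume (cyl s)) := by ring
      _ ≤ 4 * (4 * (2 * gaussMeasure A)) := by
          gcongr 4 * ?_
          exact (volume_mul_volume_cyl_le hs hE hE1).trans
            (by gcongr; exact volume_le_two_mul_gaussMeasure hA)
      _ = 32 * gaussMeasure A := by ring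
  · calc gaussMeasure A
        ≤ 2 * (4 * (volume E * volume (cyl s))) :=
          (gaussMeasure_le_two_mul_volume hA).trans
            (by gcongr; exact volume_preimage_inter_cyl_le hs hE hE1)
      _ ≤ 2 * (4 * (2 * gaussMeasure E * (2 * gaussMeasure (cyl s)))) := by
          gcongr
          · exact volume_le_two_mul_gaussMeasure hE1
          · exact volume_le_two_mul_gaussMeasure hC
      _ = 32 * (gaussMeasure E * gaussMeasure (cyl s)) := by ring
end
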